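/- arXiv:2409.08968 — 4 statements merged into one kernel-verified Lean document; each statement's English description precedes it below -/
import Mathlib

section
/- Let p be a prime, let a = ⌈p^{1/3}⌉ + 1, and let R = {1, 2, …, a} ∪ {a, 2a, …, a²} ∪ {a², 2a², …, a³} (that is, R = {i : 1 ≤ i ≤ a} ∪ {i·a : 1 ≤ i ≤ a} ∪ {i·a² : 1 ≤ i ≤ a}). Then for every integer n there exist r₁, r₂, r₃ ∈ R such that n ≡ r₁ + r₂ + r₃ (mod p). -/
/-- For a prime `p`, with `a = ⌈p^(1/3)⌉ + 1` and
`R = {1,…,a} ∪ {a,2a,…,a²} ∪ {a²,2a²,…,a³}`, every integer `n` is congruent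
modulo `p` to a sum of three elements of `R`. -/
theorem sum_of_three_residues (p : ℕ) (hp : p.Prime)
    (a : ℕ) (ha : a = ⌈(p : ℝ) ^ ((1 : ℝ) / 3)⌉₊ + 1)
    (R : Finset ℕ)
    (hR : R = (Finset.Icc 1 a).image (fun i => i)
        ∪ (Finset.Icc 1 a).image (fun i => i * a)
        ∪ (Finset.Icc 1 a).image (fun i => i * a ^ 2)) :
    ∀ n : ℤ, ∃ r₁ ∈ R, ∃ r₂ ∈ R, ∃ r₃ ∈ R,
      n ≡ (r₁ : ℤ) + (r₂ : ℤ) + (r₃ : ℤ) [ZMOD (p : ℤ)] := by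
  intro n
  have ha1 : 1 ≤ a := by omega
  have hp0 : 0 < p := hp.pos
  -- a^3 ≥ p
  have hap : p ≤ a ^ 3 := by
    have h1 : (p : ℝ) ^ ((1:ℝ)/3) ≤ (⌈(p : ℝ) ^ ((1 : ℝ) / 3)⌉₊ : ℝ) := Nat.le_ceil _
    have hppos : (0:ℝ) ≤ (p : ℝ) := by positivity
    have hp13 : (0:ℝ) ≤ (p:ℝ) ^ ((1:ℝ)/3) := Real.rpow_nonneg hppos _
    have h2 : (p : ℝ) ≤ (a : ℝ) ^ 3 := by
      have e : ((p:ℝ) ^ ((1:ℝ)/3)) ^ (3:ℕ) = (p:ℝ) := by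
        rw [← Real.rpow_natCast ((p:ℝ)^((1:ℝ)/3)) 3, ← Real.rpow_mul hppos]
        norm_num
      have hle : ((p:ℝ) ^ ((1:ℝ)/3)) ≤ (a : ℝ) := by
        rw [ha]; push_cast; linarith
      calc (p:ℝ) = ((p:ℝ) ^ ((1:ℝ)/3)) ^ (3:ℕ) := e.symm
        _ ≤ (a:ℝ) ^ 3 := pow_le_pow_left₀ hp13 hle 3
    exact_mod_cast h2
  set c : ℤ := 1 + (a:ℤ) + (a:ℤ)^2 with hc
  set x : ℕ := ((n - c) % (p:ℤ)).toNat with hx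
  have hpz : (0:ℤ) < (p:ℤ) := by exact_mod_cast hp0
  have hmod_nonneg : 0 ≤ (n - c) % (p:ℤ) := Int.emod_nonneg _ (ne_of_gt hpz)
  have hmod_lt : (n - c) % (p:ℤ) < p := Int.emod_lt_of_pos _ hpz
  have hxz : (x:ℤ) = (n - c) % (p:ℤ) := Int.toNat_of_nonneg hmod_nonneg
  have hxlt : x < a ^ 3 := by
    have : x < p := by omega
    omega
  set i := x % a with hi
  set j := (x / a) % a with hj
  set k := x / a ^ 2 with hk
  have hia : i < a := Nat.mod_lt _ (by omega)
  have hja : j < a := Nat.mod_lt _ (by omega)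
  have hka : k < a := by
    rw [hk]
    rw [Nat.div_lt_iff_lt_mul (by positivity)]
    calc x < a ^ 3 := hxlt
      _ = a * a ^ 2 := by ring
  have e3 : x / a / a = k := by rw [Nat.div_div_eq_div_mul, hk, sq]
  have e2 : j + a * k = x / a := by
    rw [← e3, hj]; exact Nat.mod_add_div _ _
  have key : i + a * j + a ^ 2 * k = x := by
    calc i + a * j + a ^ 2 * k = i + a * (j + a * k) := by ring
      _ = i + a * (x / a) := by rw [e2]
      _ = x := Nat.mod_add_div _ _
  refine ⟨i + 1, ?_, (j + 1) * a, ?_, (k + 1) * a ^ 2, ?_, ?_⟩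
  · rw [hR]
    simp only [Finset.mem_union, Finset.mem_image, Finset.mem_Icc]
    exact Or.inl (Or.inl ⟨i + 1, ⟨Nat.le_add_left 1 i, hia⟩, rfl⟩)
  · rw [hR]
    simp only [Finset.mem_union, Finset.mem_image, Finset.mem_Icc]
    exact Or.inl (Or.inr ⟨j + 1, ⟨Nat.le_add_left 1 j, hja⟩, rfl⟩)
  · rw [hR]
    simp only [Finset.mem_union, Finset.mem_image, Finset.mem_Icc]
    exact Or.inr ⟨k + 1, ⟨Nat.le_add_left 1 k, hka⟩, rfl⟩
  · have keyz : (i:ℤ) + (a:ℤ) * j + (a:ℤ) ^ 2 * k = (x:ℤ) := by exact_mod_cast key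
    have h1 : n - c ≡ (x:ℤ) [ZMOD (p:ℤ)] := by
      rw [hxz]
      exact (Int.emod_emod_of_dvd _ dvd_rfl).symm
    have h2 : n ≡ (x:ℤ) + c [ZMOD (p:ℤ)] := by
      have h3 := h1.add_right c
      simpa using h3
    have hs : ((i + 1 : ℕ) : ℤ) + (((j + 1) * a : ℕ) : ℤ) + (((k + 1) * a ^ 2 : ℕ) : ℤ)
        = (x:ℤ) + c := by
      push_cast
      rw [hc]
      linarith [keyz]
    rw [hs]
    exact h2
end

section
/- There is an absolute constant C > 0 such that for every real u ≥ 1 and every integer m with 4u ≤ m ≤ 5u, the number of triples (k₁, k₂, k₃) of integers with u ≤ kᵢ ≤ 2u for i = 1, 2, 3 and k₁ + k₂ + k₃ = m differs from 𝓗(m, u) by at most C·u, where 𝓗(m, u) = u² − ((m − 4u)² + (5u − m)²)/2. -/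
/-!
Put `a = ⌈u⌉`, `b = ⌊2u⌋` and `n = b - a + 1`. Once `k₁ = k` is fixed, the pairs `(k₂, k₃)`
in `[a, b]²` with `k₂ + k₃ = m - k` number `(n - |k - c₀|)⁺`, where `c₀ = m - a - b`. The
hypothesis `4u ≤ m ≤ 5u` puts `c₀` within distance 2 of `[a, b]`. Replacing `c₀` by a nearby
`c ∈ [a, b]` changes each term by at most 2 and makes the positive part unnecessary. The count
is therefore `n² - ∑ₖ |k - c| + O(n) = n² - ((c-a)(c-a+1) + (b-c)(b-c+1))/2 + O(u)`. Finally
`n`, `c - a` and `b - c` lie within `O(1)` of `u`, `m - 4u` and `5u - m`, all of size `O(u)`,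
so squaring them costs only `O(u)`.
-/

open Finset

theorem card_Icc_product_filter_add_eq (a b t : ℤ) :
    #{p ∈ Icc a b ×ˢ Icc a b | p.1 + p.2 = t} = (b - a + 1 - |t - a - b|).toNat := by
  have hfiber : {p ∈ Icc a b ×ˢ Icc a b | p.1 + p.2 = t}
      = (Icc (max a (t - b)) (min b (t - a))).image (fun y => (y, t - y)) := by
    ext ⟨y, z⟩
    simp only [mem_filter, mem_product, mem_Icc, mem_image, Prod.mk.injEq]
    constructor
    · rintro ⟨⟨⟨hay, hyb⟩, haz, hzb⟩, hyz⟩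
      exact ⟨y, by omega, rfl, by omega⟩
    · rintro ⟨w, hw, rfl, rfl⟩
      omega
  rw [hfiber, card_image_of_injective _ fun y y' h => (Prod.mk.inj h).1, Int.card_Icc]
  rcases abs_cases (t - a - b) with ⟨h, _⟩ | ⟨h, _⟩ <;> rw [h] <;> omega

theorem card_product_product_filter_add_add_eq_sum {G : Type*} [AddCommGroup G] [DecidableEq G]
    (s : Finset G) (m : G) :
    #{t ∈ s ×ˢ s ×ˢ s | t.1 + t.2.1 + t.2.2 = m}
      = ∑ k ∈ s, #{p ∈ s ×ˢ s | p.1 + p.2 = m - k} := by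
  simp only [card_filter, sum_product]
  refine sum_congr rfl fun k _ => sum_congr rfl fun y _ => sum_congr rfl fun z _ => ?_
  simp only [add_assoc, eq_sub_iff_add_eq']

theorem two_mul_sum_Icc_abs_sub_right {a c : ℤ} (h : a ≤ c) :
    2 * ∑ k ∈ Icc a c, |k - c| = (c - a) * (c - a + 1) := by
  induction a, h using Int.leInductionDown with
  | base => simp
  | pred a ha ih =>
    rw [← insert_Icc_left_eq_Icc_sub_one (by omega), sum_insert (by simp), mul_add, ih,
      abs_of_nonpos (by omega)]
    ring

theorem two_mul_sum_Icc_abs_sub {a b c : ℤ} (hac : a ≤ c) (hcb : c ≤ b) :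
    2 * ∑ k ∈ Icc a b, |k - c| = (c - a) * (c - a + 1) + (b - c) * (b - c + 1) := by
  induction b, hcb using Int.leInduction with
  | base => simp [two_mul_sum_Icc_abs_sub_right hac]
  | succ b hb ih =>
    rw [← insert_Icc_right_eq_Icc_add_one (by omega), sum_insert (by simp), mul_add, ih,
      abs_of_nonneg (by omega)]
    ring

theorem abs_toNat_sub_abs_sub_le_abs_sub {n x y : ℤ} (hy : |y| ≤ n) :
    |((n - |x|).toNat : ℤ) - (n - |y|)| ≤ |x - y| := by
  have h := abs_abs_sub_abs_le_abs_sub x y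
  rw [abs_le] at h ⊢
  omega

theorem abs_two_mul_card_Icc_triples_sub_le (m : ℤ) {a b c : ℤ} (hac : a ≤ c) (hcb : c ≤ b) :
    |2 * (#{t ∈ Icc a b ×ˢ Icc a b ×ˢ Icc a b | t.1 + t.2.1 + t.2.2 = m} : ℤ)
      - (2 * (b - a + 1) ^ 2 - ((c - a) * (c - a + 1) + (b - c) * (b - c + 1)))|
      ≤ 2 * (b - a + 1) * |m - a - b - c| := by
  set n := b - a + 1
  have hcard : (#(Icc a b) : ℤ) = n := by rw [Int.card_Icc]; omega
  have hterm : ∀ k ∈ Icc a b, |((n - |m - k - a - b|).toNat : ℤ) - (n - |k - c|)|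
      ≤ |m - a - b - c| := fun k hk => by
    rw [mem_Icc] at hk
    have h := abs_toNat_sub_abs_sub_le_abs_sub (x := m - k - a - b) (y := c - k) (n := n)
      (abs_le.2 ⟨by omega, by omega⟩)
    rwa [abs_sub_comm c k, show m - k - a - b - (c - k) = m - a - b - c by ring] at h
  have hsum : (#{t ∈ Icc a b ×ˢ Icc a b ×ˢ Icc a b | t.1 + t.2.1 + t.2.2 = m} : ℤ)
      - (n ^ 2 - ∑ k ∈ Icc a b, |k - c|)
      = ∑ k ∈ Icc a b, (((n - |m - k - a - b|).toNat : ℤ) - (n - |k - c|)) := by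
    simp only [card_product_product_filter_add_add_eq_sum, card_Icc_product_filter_add_eq,
      sub_sub, Nat.cast_sum, sum_sub_distrib, sum_const, hcard, nsmul_eq_mul]
    ring
  calc _ = 2 * |(#{t ∈ Icc a b ×ˢ Icc a b ×ˢ Icc a b | t.1 + t.2.1 + t.2.2 = m} : ℤ)
        - (n ^ 2 - ∑ k ∈ Icc a b, |k - c|)| := by
        rw [← two_mul_sum_Icc_abs_sub hac hcb, ← mul_sub, ← mul_sub, abs_mul, abs_two]
    _ ≤ 2 * (n * |m - a - b - c|) := by
      rw [hsum]
      gcongr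
      refine (abs_sum_le_sum_abs _ _).trans ((sum_le_sum hterm).trans_eq ?_)
      rw [sum_const, nsmul_eq_mul, hcard]
    _ = _ := by ring

theorem abs_sq_sub_sq_le {α : Type*} [CommRing α] [LinearOrder α] [IsStrictOrderedRing α]
    {x y M δ : α} (hx : |x| ≤ M) (hy : |y| ≤ M) (hxy : |x - y| ≤ δ) :
    |x ^ 2 - y ^ 2| ≤ 2 * M * δ := by
  rw [sq_sub_sq, abs_mul, two_mul]
  exact mul_le_mul ((abs_add_le x y).trans (add_le_add hx hy)) hxy (abs_nonneg _)
    (add_nonneg ((abs_nonneg x).trans hx) ((abs_nonneg x).trans hx))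

theorem abs_discrete_main_term_sub_le {u m a b c : ℝ} (hu : 1 ≤ u) (hm4 : 4 * u ≤ m)
    (hm5 : m ≤ 5 * u) (ha : u ≤ a) (ha' : a < u + 1) (hb : b ≤ 2 * u) (hb' : 2 * u - 1 < b)
    (hac : a ≤ c) (hcb : c ≤ b) (hc : |m - a - b - c| ≤ 2) :
    |2 * (b - a + 1) ^ 2 - ((c - a) * (c - a + 1) + (b - c) * (b - c + 1))
      - 2 * (u ^ 2 - ((m - 4 * u) ^ 2 + (5 * u - m) ^ 2) / 2)| ≤ 41 * u := by
  rw [abs_le] at hc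
  have hn := abs_sq_sub_sq_le (x := b - a + 1) (y := u) (M := u + 1) (δ := 1)
    (abs_le.2 ⟨by linarith, by linarith⟩) (abs_le.2 ⟨by linarith, by linarith⟩)
    (abs_le.2 ⟨by linarith, by linarith⟩)
  have hp := abs_sq_sub_sq_le (x := c - a) (y := m - 4 * u) (M := u + 1) (δ := 4)
    (abs_le.2 ⟨by linarith, by linarith⟩) (abs_le.2 ⟨by linarith, by linarith⟩)
    (abs_le.2 ⟨by linarith, by linarith⟩)
  have hq := abs_sq_sub_sq_le (x := b - c) (y := 5 * u - m) (M := u + 1) (δ := 4)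
    (abs_le.2 ⟨by linarith, by linarith⟩) (abs_le.2 ⟨by linarith, by linarith⟩)
    (abs_le.2 ⟨by linarith, by linarith⟩)
  rw [abs_le] at hn hp hq ⊢
  constructor <;> linarith

theorem exists_mem_Icc_abs_sub_le_two {u : ℝ} {m : ℤ} (hu : 1 ≤ u) (hm4 : 4 * u ≤ m)
    (hm5 : m ≤ 5 * u) :
    ∃ c, ⌈u⌉ ≤ c ∧ c ≤ ⌊2 * u⌋ ∧ |m - ⌈u⌉ - ⌊2 * u⌋ - c| ≤ 2 := by
  have ha := Int.ceil_lt_add_one u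
  have hb := Int.sub_one_lt_floor (2 * u)
  have hab : ⌈u⌉ < ⌊2 * u⌋ + 1 := Int.cast_lt (R := ℝ) |>.1 (by push_cast; linarith)
  have hlo : ⌈u⌉ - 2 < m - ⌈u⌉ - ⌊2 * u⌋ :=
    Int.cast_lt (R := ℝ) |>.1 (by push_cast; linarith [Int.floor_le (2 * u)])
  have hhi : m - ⌈u⌉ - ⌊2 * u⌋ < ⌊2 * u⌋ + 2 :=
    Int.cast_lt (R := ℝ) |>.1 (by push_cast; linarith [Int.le_ceil u])
  exact ⟨max ⌈u⌉ (min ⌊2 * u⌋ (m - ⌈u⌉ - ⌊2 * u⌋)), by omega, by omega,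
    abs_le.2 ⟨by omega, by omega⟩⟩

/-- The number of triples `(k₁,k₂,k₃)` of integers with `u ≤ kᵢ ≤ 2u` and
`k₁ + k₂ + k₃ = m` differs from `𝓗(m,u) = u² - ((m-4u)² + (5u-m)²)/2` by `O(u)`. -/
theorem triple_representation_count :
    ∃ C : ℝ, 0 < C ∧
      ∀ u : ℝ, 1 ≤ u → ∀ m : ℤ, 4 * u ≤ (m : ℝ) → (m : ℝ) ≤ 5 * u →
        ∀ I : Finset ℤ, I = Finset.Icc ⌈u⌉ ⌊2 * u⌋ →
        ∀ N : ℕ, N = ((I ×ˢ I ×ˢ I).filter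
            (fun t => t.1 + t.2.1 + t.2.2 = m)).card →
          abs ((N : ℝ)
            - (u ^ 2 - (((m : ℝ) - 4 * u) ^ 2 + (5 * u - (m : ℝ)) ^ 2) / 2)) ≤ C * u := by
  refine ⟨25, by norm_num, ?_⟩
  rintro u hu m hm4 hm5 I rfl N rfl
  obtain ⟨c, hac, hcb, hc⟩ := exists_mem_Icc_abs_sub_le_two hu hm4 hm5
  have hcount := Int.cast_le (R := ℝ) |>.2 <|
    (abs_two_mul_card_Icc_triples_sub_le m hac hcb).trans
      (mul_le_mul_of_nonneg_left hc (by omega))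
  have hc' := Int.cast_le (R := ℝ) |>.2 hc
  push_cast at hcount hc'
  have hquad := abs_discrete_main_term_sub_le hu hm4 hm5 (Int.le_ceil u)
    (Int.ceil_lt_add_one u) (Int.floor_le _) (Int.sub_one_lt_floor _) (Int.cast_le.2 hac)
    (Int.cast_le.2 hcb) hc'
  rw [abs_le] at hcount hquad ⊢
  constructor <;> linarith [Int.le_ceil u, Int.floor_le (2 * u)]
end

section
/- Let m be an integer, let p₁, …, p_k be distinct primes, let q₀ = p₁p₂⋯p_k, and for each j let R_j be a subset of {0, 1, …, p_j − 1}. Let R₀ = { r ∈ {0, 1, …, q₀ − 1} : for every j there exists r_j ∈ R_j with r ≡ r_j (mod p_j) }. Then G(q₀, R₀, m) = ∏_{j=1}^{k} G(p_j, R_j, m). -/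
open scoped Classical

/-- `e(x) = exp(2πix)`. -/
noncomputable def e (x : ℝ) : ℂ := Complex.exp (2 * (Real.pi : ℂ) * Complex.I * (x : ℂ))

/-- `(μ/φ)(n) = μ(n)/φ(n)`. -/
noncomputable def muphi (n : ℕ) : ℂ :=
  ((ArithmeticFunction.moebius n : ℤ) : ℂ) / (Nat.totient n : ℂ)

/-- The arithmetic factor
`G(Q, R, m) = Q⁻³ ∑_{w ∣ Q} ∑_{1 ≤ a ≤ w, (a,w)=1} e(-am/w)
  (∑_{ℓ=0}^{Q-1} (μ/φ)(Q/gcd(Q, a(Q/w)+ℓ)) ∑_{r ∈ R} e(-ℓr/Q))³`. -/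
noncomputable def G (Q : ℕ) (R : Finset ℤ) (m : ℤ) : ℂ :=
  ((Q : ℂ) ^ 3)⁻¹ * ∑ w ∈ Q.divisors,
    ∑ a ∈ (Finset.Icc 1 w).filter (fun a => Nat.gcd a w = 1),
      e (-((a : ℝ) * (m : ℝ) / (w : ℝ))) *
        (∑ ℓ ∈ Finset.range Q,
          muphi (Q / Nat.gcd Q (a * (Q / w) + ℓ)) *
            ∑ r ∈ R, e (-((ℓ : ℝ) * (r : ℝ) / (Q : ℝ)))) ^ 3

/-!
Put `b = a (Q / w)`: the pairs `(w, a)` in the definition of `G` correspond bijectively to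
`b ∈ [1, Q]`, so `G(Q, R, m) = Q⁻³ ∑_{b mod Q} e(-bm/Q) S_Q(b)³` with `S_Q` the inner sum.
For `Q = p₁⋯p_k` with pairwise coprime factors, parametrise residues mod `Q` by
`b = ∑ⱼ yⱼ Q/pⱼ`, `yⱼ mod pⱼ`. Then `e(-bm/Q) = ∏ⱼ e(-yⱼm/pⱼ)`; parametrising `ℓ` in `S_Q` the
same way, `Q/(Q, b + ℓ)` splits into the coprime factors `pⱼ/(pⱼ, yⱼ + ℓⱼ)` on which `μ/φ` is
multiplicative, and `∑_{r ∈ R₀} e(-ℓr/Q) = ∏ⱼ ∑_{r ∈ Rⱼ} e(-ℓⱼr/pⱼ)` through the ordinary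
Chinese remainder bijection `R₀ ≅ ∏ⱼ Rⱼ`. Hence every summand is a product over `j`, and so
are both sums.
-/

open Finset
open scoped Function

lemma e_add (x y : ℝ) : e (x + y) = e x * e y := by
  simp only [e, Complex.ofReal_add, mul_add, Complex.exp_add]

lemma e_intCast (n : ℤ) : e n = 1 := by
  rw [e, ← Complex.exp_int_mul_two_pi_mul_I n]
  push_cast
  ring_nf

lemma e_add_intCast (x : ℝ) (n : ℤ) : e (x + n) = e x := by
  rw [e_add, e_intCast, mul_one]

lemma e_sum {ι : Type*} (s : Finset ι) (f : ι → ℝ) : e (∑ i ∈ s, f i) = ∏ i ∈ s, e (f i) := by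
  simp only [e, Complex.ofReal_sum, Finset.mul_sum, Complex.exp_sum]

lemma e_intCast_div_eq_of_modEq {q : ℕ} (hq : q ≠ 0) {a b : ℤ} (h : a ≡ b [ZMOD q]) :
    e (a / q) = e (b / q) := by
  obtain ⟨t, ht⟩ := Int.modEq_iff_dvd.mp h
  have : (b : ℝ) / q = a / q + t := by
    rw [eq_add_of_sub_eq' ht]
    push_cast
    field_simp
  rw [this, e_add_intCast]

lemma e_neg_natCast_mul_emod_div {q : ℕ} (hq : q ≠ 0) (t : ℕ) (r : ℤ) :
    e (-((t : ℝ) * ((r % q : ℤ) : ℝ) / q)) = e (-((t : ℝ) * r / q)) := by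
  have h := e_intCast_div_eq_of_modEq hq (((Int.mod_modEq r q).mul_left t).neg)
  simpa only [Int.cast_neg, Int.cast_mul, Int.cast_natCast, neg_div] using h

lemma muphi_mul {m n : ℕ} (h : m.Coprime n) : muphi (m * n) = muphi m * muphi n := by
  simp only [muphi, ArithmeticFunction.isMultiplicative_moebius.map_mul_of_coprime h,
    Nat.totient_mul h]
  push_cast
  ring

lemma muphi_prod {ι : Type*} (s : Finset ι) (g : ι → ℕ)
    (hs : (s : Set ι).Pairwise (Nat.Coprime on g)) :
    muphi (∏ i ∈ s, g i) = ∏ i ∈ s, muphi (g i) :=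
  let f : ArithmeticFunction ℂ := ⟨muphi, by simp [muphi]⟩
  have hf : f.IsMultiplicative := ⟨by simp [f, muphi], muphi_mul⟩
  hf.map_prod g s hs

lemma Nat.gcd_prod_eq_prod_gcd {ι : Type*} (s : Finset ι) (g : ι → ℕ)
    (hs : (s : Set ι).Pairwise (Nat.Coprime on g)) (n : ℕ) :
    Nat.gcd (∏ i ∈ s, g i) n = ∏ i ∈ s, Nat.gcd (g i) n := by
  classical
  induction s using Finset.induction_on with
  | empty => simp
  | insert a s has ih =>
    rw [coe_insert, Set.pairwise_insert_of_symm] at hs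
    have hcop : (g a).Coprime (∏ i ∈ s, g i) :=
      Nat.Coprime.prod_right fun i hi => hs.2 _ hi (ne_of_mem_of_not_mem hi has).symm
    rw [prod_insert has, prod_insert has, Nat.gcd_comm, hcop.gcd_mul, Nat.gcd_comm n,
      Nat.gcd_comm n, ih hs.1]

lemma Nat.gcd_mul_div_eq_div {Q w a : ℕ} (hw : w ∣ Q) (ha : a.Coprime w) :
    Nat.gcd Q (a * (Q / w)) = Q / w := by
  calc Nat.gcd Q (a * (Q / w)) = Nat.gcd (w * (Q / w)) (a * (Q / w)) := by
        rw [Nat.mul_div_cancel' hw]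
    _ = Q / w := by rw [Nat.gcd_mul_right, Nat.gcd_comm, ha, one_mul]

lemma sum_divisors_sum_coprime_eq_sum_Icc {M : Type*} [AddCommMonoid M] (Q : ℕ) (f : ℕ → M) :
    ∑ w ∈ Q.divisors, ∑ a ∈ (Icc 1 w).filter (fun a => Nat.gcd a w = 1), f (a * (Q / w)) =
      ∑ b ∈ Icc 1 Q, f b := by
  rcases Q.eq_zero_or_pos with rfl | hQ
  · simp
  rw [sum_sigma']
  refine sum_nbij' (fun x => x.2 * (Q / x.1)) (fun b => ⟨Q / Q.gcd b, b / Q.gcd b⟩)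
    ?_ ?_ ?_ ?_ (fun _ _ => rfl)
  · simp only [mem_sigma, Nat.mem_divisors, mem_filter, mem_Icc, and_imp]
    rintro ⟨w, a⟩ hw - ha1 haw -
    have hQw : 0 < Q / w := Nat.div_pos (Nat.le_of_dvd hQ hw) (Nat.pos_of_dvd_of_pos hw hQ)
    exact ⟨Nat.mul_pos ha1 hQw, (Nat.mul_le_mul_right _ haw).trans (Nat.mul_div_cancel' hw).le⟩
  · simp only [mem_sigma, Nat.mem_divisors, mem_filter, mem_Icc, and_imp]
    intro b hb1 hbQ
    have hg : 0 < Q.gcd b := Nat.gcd_pos_of_pos_left _ hQ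
    refine ⟨⟨Nat.div_dvd_of_dvd (Nat.gcd_dvd_left _ _), hQ.ne'⟩,
      ⟨Nat.div_pos (Nat.le_of_dvd hb1 (Nat.gcd_dvd_right _ _)) hg, Nat.div_le_div_right hbQ⟩,
      (Nat.coprime_div_gcd_div_gcd hg).symm⟩
  · simp only [mem_sigma, Nat.mem_divisors, mem_filter, mem_Icc, and_imp]
    rintro ⟨w, a⟩ hw - - - ha
    have hQw : 0 < Q / w := Nat.div_pos (Nat.le_of_dvd hQ hw) (Nat.pos_of_dvd_of_pos hw hQ)
    rw [Nat.gcd_mul_div_eq_div hw ha, Nat.div_div_self hw hQ.ne', Nat.mul_div_cancel _ hQw]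
  · intro b _
    rw [Nat.div_div_self (Nat.gcd_dvd_left _ _) hQ.ne', Nat.div_mul_cancel (Nat.gcd_dvd_right _ _)]

lemma Function.Periodic.sum_Icc_one_eq_sum_range {M : Type*} [AddCommMonoid M] {f : ℕ → M}
    {Q : ℕ} (hf : Function.Periodic f Q) : ∑ b ∈ Icc 1 Q, f b = ∑ b ∈ range Q, f b := by
  rcases Q.eq_zero_or_pos with rfl | hQ
  · simp
  rw [range_eq_Ico, sum_eq_sum_Ico_succ_bot hQ, ← Ico_add_one_right_eq_Icc,
    sum_Ico_succ_top hQ, add_comm, ← zero_add Q, hf 0]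

lemma sum_range_eq_sum_zmod {M : Type*} [AddCommMonoid M] (Q : ℕ) [NeZero Q] (f : ℕ → M) :
    ∑ b ∈ range Q, f b = ∑ x : ZMod Q, f x.val :=
  sum_nbij' (fun b => (b : ZMod Q)) ZMod.val (fun _ _ => mem_univ _)
    (fun x _ => mem_range.mpr (ZMod.val_lt x))
    (fun _ hb => ZMod.val_cast_of_lt (mem_range.mp hb)) (fun x _ => ZMod.natCast_zmod_val x)
    (fun _ hb => by rw [ZMod.val_cast_of_lt (mem_range.mp hb)])

/-- The cubed sum in `G`, at `b = a (Q / w)`. -/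
noncomputable def innerSum (Q : ℕ) (R : Finset ℤ) (b : ℕ) : ℂ :=
  ∑ ℓ ∈ range Q, muphi (Q / Nat.gcd Q (b + ℓ)) * ∑ r ∈ R, e (-((ℓ : ℝ) * (r : ℝ) / (Q : ℝ)))

lemma G_eq_sum_zmod (Q : ℕ) [NeZero Q] (R : Finset ℤ) (m : ℤ) :
    G Q R m = ((Q : ℂ) ^ 3)⁻¹ *
      ∑ x : ZMod Q, e (-((x.val : ℝ) * (m : ℝ) / (Q : ℝ))) * innerSum Q R x.val ^ 3 := by
  have hQ : (Q : ℝ) ≠ 0 := Nat.cast_ne_zero.mpr (NeZero.ne Q)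
  set F : ℕ → ℂ := fun b => e (-((b : ℝ) * (m : ℝ) / (Q : ℝ))) * innerSum Q R b ^ 3
  have hF : Function.Periodic F Q := fun b => by
    have he : -(((b + Q : ℕ) : ℝ) * m / Q) = -(b * m / Q) + (-m : ℤ) := by
      push_cast
      field_simp
      ring
    have hS : innerSum Q R (b + Q) = innerSum Q R b := by
      simp only [innerSum, add_right_comm b Q, Nat.gcd_add_self_right]
    simp only [F, he, e_add_intCast, hS]
  rw [G, ← sum_range_eq_sum_zmod Q (f := F), ← hF.sum_Icc_one_eq_sum_range,
    ← sum_divisors_sum_coprime_eq_sum_Icc]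
  congr 1
  refine sum_congr rfl fun w hw => sum_congr rfl fun a _ => ?_
  have hwQ := Nat.dvd_of_mem_divisors hw
  have hw0 : (w : ℝ) ≠ 0 := Nat.cast_ne_zero.mpr (Nat.ne_of_gt (Nat.pos_of_mem_divisors hw))
  have he : (a : ℝ) * m / w = ((a * (Q / w) : ℕ) : ℝ) * m / Q := by
    rw [Nat.cast_mul, Nat.cast_div hwQ hw0]
    field_simp
  simp only [F, innerSum, he]

section CRT

variable {ι : Type*} [Fintype ι] {p : ι → ℕ}

lemma intCast_eq_intCast_iff_forall (hp : Pairwise (Nat.Coprime on p)) {a b : ℤ} :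
    (a : ZMod (∏ i, p i)) = b ↔ ∀ j, (a : ZMod (p j)) = b := by
  rw [← (ZMod.prodEquivPi p hp).injective.eq_iff, map_intCast, map_intCast, funext_iff]
  rfl

noncomputable def crtSet (p : ι → ℕ) (R : ι → Finset ℤ) : Finset ℤ :=
  (Icc (0 : ℤ) (((∏ i, p i : ℕ) : ℤ) - 1)).filter
    (fun r => ∀ j, ∃ rj ∈ R j, r ≡ rj [ZMOD (p j : ℤ)])

instance [∀ i, NeZero (p i)] : NeZero (∏ i, p i) :=
  ⟨prod_ne_zero_iff.mpr fun i _ => NeZero.ne (p i)⟩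

lemma muphi_div_gcd_prod [∀ i, NeZero (p i)] (hp : Pairwise (Nat.Coprime on p)) (n : ℕ) :
    muphi ((∏ i, p i) / Nat.gcd (∏ i, p i) n) = ∏ j, muphi (p j / Nat.gcd (p j) n) := by
  have hdiv : (∏ i, p i) / ∏ j, Nat.gcd (p j) n = ∏ j, p j / Nat.gcd (p j) n := by
    refine Nat.div_eq_of_eq_mul_left
      (prod_pos fun j _ => Nat.gcd_pos_of_pos_left _ (NeZero.pos _)) ?_
    rw [← prod_mul_distrib]
    exact prod_congr rfl fun j _ => (Nat.div_mul_cancel (Nat.gcd_dvd_left _ _)).symm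
  rw [Nat.gcd_prod_eq_prod_gcd _ _ (hp.set_pairwise _), hdiv]
  exact muphi_prod _ _ fun i _ j _ hij =>
    ((hp hij).coprime_div_left (Nat.gcd_dvd_left _ _)).coprime_div_right (Nat.gcd_dvd_left _ _)

variable [DecidableEq ι]

def cofactor (p : ι → ℕ) (j : ι) : ℕ := ∏ i ∈ univ.erase j, p i

lemma mul_cofactor (p : ι → ℕ) (j : ι) : p j * cofactor p j = ∏ i, p i :=
  mul_prod_erase _ _ (mem_univ j)

lemma dvd_cofactor (p : ι → ℕ) {i j : ι} (hij : i ≠ j) : p i ∣ cofactor p j :=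
  dvd_prod_of_mem p (mem_erase.mpr ⟨hij, mem_univ i⟩)

lemma coprime_cofactor (hp : Pairwise (Nat.Coprime on p)) (j : ι) : (p j).Coprime (cofactor p j) :=
  Nat.Coprime.prod_right fun _ hi => hp (mem_erase.mp hi).1.symm

/-- Twisting the Chinese remainder map by the cofactors `N / pⱼ` is what makes the additive
character split: `e(b/N) = ∏ⱼ e(yⱼ/pⱼ)` (`e_crtTwist`). -/
def crtTwist (p : ι → ℕ) (y : ∀ j, ZMod (p j)) : ZMod (∏ i, p i) :=
  ((∑ j, (y j).val * cofactor p j : ℕ) : ZMod (∏ i, p i))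

variable [∀ i, NeZero (p i)]

lemma natCast_val_crtTwist (y : ∀ j, ZMod (p j)) (j : ι) :
    (((crtTwist p y).val : ℕ) : ZMod (p j)) = y j * cofactor p j := by
  rw [ZMod.natCast_val, crtTwist, ZMod.cast_natCast (dvd_prod_of_mem p (mem_univ j)),
    Nat.cast_sum, sum_eq_single j, Nat.cast_mul, ZMod.natCast_zmod_val]
  · intro i _ hij
    rw [Nat.cast_mul, (ZMod.natCast_eq_zero_iff _ _).mpr (dvd_cofactor p hij.symm), mul_zero]
  · exact fun h => absurd (mem_univ j) h

lemma crtTwist_injective (hp : Pairwise (Nat.Coprime on p)) : Function.Injective (crtTwist p) := by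
  intro y z h
  funext j
  have hunit : IsUnit (cofactor p j : ZMod (p j)) :=
    (ZMod.isUnit_iff_coprime _ _).mpr (coprime_cofactor hp j).symm
  apply hunit.mul_left_injective
  dsimp only
  rw [← natCast_val_crtTwist, ← natCast_val_crtTwist, h]

lemma crtTwist_bijective (hp : Pairwise (Nat.Coprime on p)) : Function.Bijective (crtTwist p) :=
  (Fintype.bijective_iff_injective_and_card _).mpr
    ⟨crtTwist_injective hp, by simp [Fintype.card_pi, ZMod.card]⟩

lemma sum_zmod_eq_prod_sum_of_crtTwist (hp : Pairwise (Nat.Coprime on p))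
    {F : ZMod (∏ i, p i) → ℂ} {f : ∀ j, ZMod (p j) → ℂ}
    (hF : ∀ y, F (crtTwist p y) = ∏ j, f j (y j)) :
    ∑ x, F x = ∏ j, ∑ x, f j x := by
  rw [← Equiv.sum_comp (Equiv.ofBijective _ (crtTwist_bijective hp)), prod_univ_sum]
  simp [hF]

lemma e_crtTwist (y : ∀ j, ZMod (p j)) (c : ℤ) :
    e (-(((crtTwist p y).val : ℝ) * c / (∏ i, p i : ℕ))) =
      ∏ j, e (-(((y j).val : ℝ) * c / (p j : ℝ))) := by
  set n := ∑ j, (y j).val * cofactor p j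
  have hmod : (-((crtTwist p y).val * c) : ℤ) ≡ -(n * c) [ZMOD (∏ i, p i : ℕ)] := by
    refine (Int.ModEq.mul_right c ?_).neg
    rw [crtTwist, ZMod.val_natCast]
    exact_mod_cast Nat.mod_modEq n _
  calc e (-(((crtTwist p y).val : ℝ) * c / (∏ i, p i : ℕ)))
      = e (((-((crtTwist p y).val * c) : ℤ) : ℝ) / (∏ i, p i : ℕ)) := by push_cast; ring_nf
    _ = e (((-(n * c) : ℤ) : ℝ) / (∏ i, p i : ℕ)) := e_intCast_div_eq_of_modEq (NeZero.ne _) hmod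
    _ = e (∑ j, -(((y j).val : ℝ) * c / (p j : ℝ))) := by
      congr 1
      rw [sum_neg_distrib, Int.cast_neg, neg_div, Int.cast_mul, Int.cast_natCast, Nat.cast_sum,
        sum_mul, sum_div]
      refine congrArg _ (sum_congr rfl fun j _ => ?_)
      have hpj : (p j : ℝ) ≠ 0 := Nat.cast_ne_zero.mpr (NeZero.ne _)
      have hcj : (cofactor p j : ℝ) ≠ 0 :=
        Nat.cast_ne_zero.mpr (prod_ne_zero_iff.mpr fun i _ => NeZero.ne (p i))
      rw [← mul_cofactor p j]
      push_cast
      field_simp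
    _ = _ := e_sum _ _

lemma gcd_crtTwist_add (hp : Pairwise (Nat.Coprime on p)) (y z : ∀ j, ZMod (p j)) (j : ι) :
    Nat.gcd (p j) ((crtTwist p y).val + (crtTwist p z).val) =
      Nat.gcd (p j) ((y j).val + (z j).val) := by
  have hmod : (crtTwist p y).val + (crtTwist p z).val ≡
      ((y j).val + (z j).val) * cofactor p j [MOD p j] := by
    rw [← ZMod.natCast_eq_natCast_iff]
    push_cast
    rw [natCast_val_crtTwist, natCast_val_crtTwist, ZMod.natCast_zmod_val, ZMod.natCast_zmod_val,
      add_mul]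
  rw [Nat.gcd_comm, hmod.gcd_eq, Nat.Coprime.gcd_mul_right_cancel _ (coprime_cofactor hp j).symm,
    Nat.gcd_comm]

lemma sum_crtSet_prod (hp : Pairwise (Nat.Coprime on p)) {R : ι → Finset ℤ}
    (hR : ∀ j, ∀ r ∈ R j, 0 ≤ r ∧ r < p j) (g : ι → ℤ → ℂ) (hg : ∀ j r, g j (r % p j) = g j r) :
    ∑ r ∈ crtSet p R, ∏ j, g j r = ∏ j, ∑ r ∈ R j, g j r := by
  have hRmod : ∀ j, ∀ r ∈ R j, r % p j = r := fun j r hr =>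
    Int.emod_eq_of_lt (hR j r hr).1 (hR j r hr).2
  let lift : (∀ j, ℤ) → ℤ := fun v =>
    ((ZMod.prodEquivPi p hp).symm (fun j => (v j : ZMod (p j)))).val
  have hlift : ∀ v j, (lift v : ZMod (p j)) = v j := fun v j => by
    have h := congrFun ((ZMod.prodEquivPi p hp).apply_symm_apply fun j => (v j : ZMod (p j))) j
    rwa [ZMod.prodEquivPi_apply, ZMod.castHom_apply, ← ZMod.natCast_val, ← Int.cast_natCast] at h
  have hlift_lt : ∀ v, 0 ≤ lift v ∧ lift v < (∏ i, p i : ℕ) := fun v =>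
    ⟨Int.natCast_nonneg _, Int.ofNat_lt.mpr (ZMod.val_lt _)⟩
  rw [prod_univ_sum]
  refine sum_nbij' (fun r j => r % p j) lift ?_ ?_ ?_ ?_ ?_
  · simp only [crtSet, mem_filter, Fintype.mem_piFinset, and_imp]
    intro r _ hr j
    obtain ⟨rj, hrj, hmod⟩ := hr j
    rwa [hmod.eq, hRmod j rj hrj]
  · simp only [crtSet, mem_filter, Fintype.mem_piFinset, mem_Icc]
    intro v hv
    refine ⟨⟨(hlift_lt v).1, by linarith [(hlift_lt v).2]⟩, fun j => ⟨v j, hv j, ?_⟩⟩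
    exact (ZMod.intCast_eq_intCast_iff _ _ _).mp (hlift v j)
  · simp only [crtSet, mem_filter, mem_Icc, and_imp]
    intro r hr0 hrN _
    have hmod : lift (fun j => r % p j) ≡ r [ZMOD (∏ i, p i : ℕ)] :=
      (ZMod.intCast_eq_intCast_iff _ _ _).mp <| (intCast_eq_intCast_iff_forall hp).mpr fun _ => by
        rw [hlift, ZMod.intCast_mod]
    rw [← Int.emod_eq_of_lt (hlift_lt _).1 (hlift_lt _).2, hmod.eq,
      Int.emod_eq_of_lt hr0 (by omega)]
  · simp only [Fintype.mem_piFinset]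
    intro v hv
    funext j
    rw [← hRmod j _ (hv j), ← ZMod.intCast_eq_intCast_iff', hlift]
  · exact fun r _ => prod_congr rfl fun j _ => (hg j r).symm

lemma sum_crtSet_e_crtTwist (hp : Pairwise (Nat.Coprime on p)) {R : ι → Finset ℤ}
    (hR : ∀ j, ∀ r ∈ R j, 0 ≤ r ∧ r < p j) (z : ∀ j, ZMod (p j)) :
    ∑ r ∈ crtSet p R, e (-(((crtTwist p z).val : ℝ) * r / (∏ i, p i : ℕ))) =
      ∏ j, ∑ r ∈ R j, e (-(((z j).val : ℝ) * r / p j)) := by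
  simp only [e_crtTwist]
  exact sum_crtSet_prod hp hR _ fun j r => e_neg_natCast_mul_emod_div (NeZero.ne _) _ r

lemma innerSum_crtTwist (hp : Pairwise (Nat.Coprime on p)) {R : ι → Finset ℤ}
    (hR : ∀ j, ∀ r ∈ R j, 0 ≤ r ∧ r < p j) (y : ∀ j, ZMod (p j)) :
    innerSum (∏ i, p i) (crtSet p R) (crtTwist p y).val = ∏ j, innerSum (p j) (R j) (y j).val := by
  simp only [innerSum, sum_range_eq_sum_zmod]
  refine sum_zmod_eq_prod_sum_of_crtTwist hp fun z => ?_
  rw [muphi_div_gcd_prod hp, sum_crtSet_e_crtTwist hp hR, ← prod_mul_distrib]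
  simp only [gcd_crtTwist_add hp]

end CRT

/-- With `q₀ = p₁⋯p_k` a product of distinct primes, `R_j ⊆ {0,…,p_j-1}` and
`R₀` the set of `r ∈ {0,…,q₀-1}` congruent mod each `p_j` to some element of `R_j`,
the arithmetic factor multiplies: `G(q₀, R₀, m) = ∏_j G(p_j, R_j, m)`. -/
theorem G_factorization (m : ℤ) (k : ℕ) (p : Fin k → ℕ) (hp : ∀ j, (p j).Prime)
    (hinj : Function.Injective p) (q₀ : ℕ) (hq₀ : q₀ = ∏ j : Fin k, p j)
    (R : Fin k → Finset ℤ) (hR : ∀ j, ∀ r ∈ R j, 0 ≤ r ∧ r < (p j : ℤ))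
    (R₀ : Finset ℤ)
    (hR₀ : R₀ = (Finset.Icc (0 : ℤ) ((q₀ : ℤ) - 1)).filter
        (fun r => ∀ j, ∃ rj ∈ R j, r ≡ rj [ZMOD (p j : ℤ)])) :
    G q₀ R₀ m = ∏ j : Fin k, G (p j) (R j) m := by
  subst hq₀
  obtain rfl : R₀ = crtSet p R := by rw [hR₀, crtSet]; congr
  have hcop : Pairwise (Nat.Coprime on p) := fun i j hij =>
    (Nat.coprime_primes (hp i) (hp j)).mpr (hinj.ne hij)
  have : ∀ j, NeZero (p j) := fun j => ⟨(hp j).ne_zero⟩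
  simp only [G_eq_sum_zmod, prod_mul_distrib]
  congr 1
  · simp only [Nat.cast_prod, prod_pow, prod_inv_distrib]
  · refine sum_zmod_eq_prod_sum_of_crtTwist hcop fun y => ?_
    rw [e_crtTwist, innerSum_crtTwist hcop hR, ← prod_pow, ← prod_mul_distrib]
end

section
/- Let m be an integer, let q₀ be a squarefree positive integer, and let R₀ be a finite set of integers. If q is a positive integer such that there exists a prime p with p ∣ q₀ and p² ∣ q, then f(q) = 0. -/
/-- `f(q) = q₀⁻³ ∑_{1 ≤ a ≤ q, (a,q)=1} e(-am/q)
  (∑_{ℓ=0}^{q₀-1} (μ/φ)(qq₀/gcd(qq₀, aq₀+ℓq)) ∑_{r ∈ R₀} e(-ℓr/q₀))³`. -/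
noncomputable def f (m : ℤ) (q₀ : ℕ) (R₀ : Finset ℤ) (q : ℕ) : ℂ :=
  ((q₀ : ℂ) ^ 3)⁻¹ * ∑ a ∈ (Finset.Icc 1 q).filter (fun a => Nat.gcd a q = 1),
    e (-((a : ℝ) * (m : ℝ) / (q : ℝ))) *
      (∑ ℓ ∈ Finset.range q₀,
        muphi ((q * q₀) / Nat.gcd (q * q₀) (a * q₀ + ℓ * q)) *
          ∑ r ∈ R₀, e (-((ℓ : ℝ) * (r : ℝ) / (q₀ : ℝ)))) ^ 3

/-!
`μ(n)/φ(n)` vanishes unless `n` is squarefree. For `a` coprime to `q`, the `p`-adic valuation of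
`a q₀ + ℓ q` is exactly `1` (as `p ∤ a`, `p ∥ q₀` and `p² ∣ q`), while that of `q q₀` is at least
`3`; hence `p²` divides `q q₀ / gcd(q q₀, a q₀ + ℓ q)` and every term of `f(q)` vanishes.
-/

theorem Prime.pow_dvd_of_pow_add_dvd_mul {M : Type*} [CommMonoidWithZero M] [IsCancelMulZero M]
    {p a b : M} (hp : Prime p) {j k : ℕ} (ha : ¬p ^ (j + 1) ∣ a) (h : p ^ (j + k) ∣ a * b) :
    p ^ k ∣ b := by
  induction j generalizing a with
  | zero => simpa using hp.pow_dvd_of_dvd_mul_left k (by simpa using ha) (by simpa using h)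
  | succ j ih =>
    by_cases hpa : p ∣ a
    · obtain ⟨c, rfl⟩ := hpa
      refine ih (a := c) (fun hc => ha ?_) ?_
      · rw [pow_succ']
        exact mul_dvd_mul_left p hc
      · rwa [add_right_comm, pow_succ', mul_assoc, mul_dvd_mul_iff_left hp.ne_zero] at h
    · exact (pow_dvd_pow p (by omega)).trans (hp.pow_dvd_of_dvd_mul_left _ hpa h)

theorem muphi_eq_zero_of_not_squarefree {n : ℕ} (hn : ¬Squarefree n) : muphi n = 0 := by
  simp [muphi, ArithmeticFunction.moebius_eq_zero_of_not_squarefree hn]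

theorem sq_dvd_div_gcd_of_coprime {q₀ q p a : ℕ} (hsf : Squarefree q₀) (hp : p.Prime)
    (hpq₀ : p ∣ q₀) (hpq : p ^ 2 ∣ q) (ha : a.Coprime q) (ℓ : ℕ) :
    p ^ 2 ∣ q * q₀ / Nat.gcd (q * q₀) (a * q₀ + ℓ * q) := by
  have hq₀ : ¬p ^ 2 ∣ q₀ := by
    rw [sq]
    exact Nat.squarefree_iff_prime_squarefree.mp hsf p hp
  have hsum : ¬p ^ (1 + 1) ∣ a * q₀ + ℓ * q := by
    intro h
    have haq₀ : p ^ (1 + 1) ∣ q₀ * a := by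
      rw [mul_comm]
      exact (Nat.dvd_add_left (hpq.mul_left ℓ)).mp h
    have hpa : p ∣ a := by simpa using hp.prime.pow_dvd_of_pow_add_dvd_mul hq₀ haq₀
    exact hp.one_lt.ne' (Nat.eq_one_of_dvd_coprimes ha hpa ((dvd_pow_self p two_ne_zero).trans hpq))
  have hprod : p ^ (1 + 2) ∣ q * q₀ := by
    rw [add_comm, pow_succ]
    exact mul_dvd_mul hpq hpq₀
  rw [← Nat.mul_div_cancel' (Nat.gcd_dvd_left (q * q₀) (a * q₀ + ℓ * q))] at hprod
  exact hp.prime.pow_dvd_of_pow_add_dvd_mul (fun h => hsum (h.trans (Nat.gcd_dvd_right _ _))) hprod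

theorem f_eq_zero_of_sq_dvd_general (m : ℤ) (q₀ : ℕ) (hsf : Squarefree q₀)
    (R₀ : Finset ℤ) (q : ℕ)
    (p : ℕ) (hp : p.Prime) (hpq₀ : p ∣ q₀) (hpq : p ^ 2 ∣ q) :
    f m q₀ R₀ q = 0 := by
  refine mul_eq_zero_of_right _ (Finset.sum_eq_zero fun a ha => ?_)
  have hcop : a.Coprime q := (Finset.mem_filter.mp ha).2
  refine mul_eq_zero_of_right _ (pow_eq_zero_iff three_ne_zero |>.mpr ?_)
  refine Finset.sum_eq_zero fun ℓ _ => mul_eq_zero_of_left ?_ _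
  refine muphi_eq_zero_of_not_squarefree fun hsq => ?_
  exact Nat.squarefree_iff_prime_squarefree.mp hsq p hp
    (by simpa [sq] using sq_dvd_div_gcd_of_coprime hsf hp hpq₀ hpq hcop ℓ)

/-- If some prime `p` divides `q₀` and `p²` divides `q`, then `f(q) = 0`. -/
theorem f_eq_zero_of_sq_dvd (m : ℤ) (q₀ : ℕ) (hq₀ : 0 < q₀) (hsf : Squarefree q₀)
    (R₀ : Finset ℤ) (q : ℕ) (hq : 0 < q)
    (p : ℕ) (hp : p.Prime) (hpq₀ : p ∣ q₀) (hpq : p ^ 2 ∣ q) :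
    f m q₀ R₀ q = 0 :=
  f_eq_zero_of_sq_dvd_general m q₀ hsf R₀ q p hp hpq₀ hpq
end
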